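/- Backward recurrence for the HMM×DFA lookahead table: With an HMM and a DFA M = (Q, 𝒱, δ, q_0, F) over the same vocabulary, assume q(Z_t=z) > 0 for all 1 ≤ t ≤ T and z ∈ ℋ, and define g_t(z, s) = Σ_{x_{t+1:T}} q(X_{t+1:T}=x_{t+1:T} | Z_t=z) · 1[δ̂(s, x_{t+1:T}) ∈ F] for 1 ≤ t < T, together with g_T(z, s) = 1[s ∈ F]. Then for every 1 ≤ t ≤ T−1, z ∈ ℋ, and s ∈ Q: g_t(z, s) = Σ_{x∈𝒱} Σ_{z'∈ℋ} A(z, z') · B(z', x) · g_{t+1}(z', δ(s, x)). -/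

import Mathlib

/-!
Given `Z_t = z`, the emissions after time `t` are independent of the past and their law is the
backward probability `β_{T-t}(z, ·)`. Hence the conditional probability in `g_t(z, s)` is
`β_{T-t}(z, ·)`, and `g_t(z, s)` is the `β`-weighted probability that the DFA started in `s`
accepts the remaining tokens. The recurrence is then the backward recursion
`β_{n+1}(z, x·w) = Σ_{z'} A(z, z') B(z', x) β_n(z', w)`, the first token `x` moving the DFA to
`δ(s, x)`. The Markov property itself is proved by induction on `t`: forgetting the first time
step leaves an HMM whose initial weights are `π A`.
-/

open scoped Classical

noncomputable section

/-- A hidden Markov model over a finite hidden-state set `H` and a finite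
vocabulary `V`: an initial distribution `pi`, a row-stochastic transition
matrix `A`, and a row-stochastic emission matrix `B`. -/
structure HMM (H V : Type*) [Fintype H] [Fintype V] where
  pi : H → ℝ
  A : H → H → ℝ
  B : H → V → ℝ
  pi_nonneg : ∀ z, 0 ≤ pi z
  A_nonneg : ∀ z z', 0 ≤ A z z'
  B_nonneg : ∀ z x, 0 ≤ B z x
  pi_sum_one : ∑ z, pi z = 1
  A_row_sum_one : ∀ z, ∑ z', A z z' = 1
  B_row_sum_one : ∀ z, ∑ x, B z x = 1

namespace HMM

variable {H V : Type*} [Fintype H] [Fintype V]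

/-- The joint probability of a latent-state sequence `z` and an observation
sequence `x` of length `T + 1` (positions are indexed `0, …, T`):
`q(z, x) = π(z₀) B(z₀, x₀) ∏ᵢ A(zᵢ, zᵢ₊₁) B(zᵢ₊₁, xᵢ₊₁)`. -/
def joint (M : HMM H V) (T : ℕ) (z : Fin (T + 1) → H) (x : Fin (T + 1) → V) : ℝ :=
  M.pi (z 0) * M.B (z 0) (x 0) *
    ∏ i : Fin T, (M.A (z i.castSucc) (z i.succ) * M.B (z i.succ) (x i.succ))

/-- The probability of an event `E` over latent-state and observation
sequences, obtained by summing the joint distribution. -/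
def prob (M : HMM H V) (T : ℕ)
    (E : (Fin (T + 1) → H) → (Fin (T + 1) → V) → Prop) : ℝ :=
  ∑ z : Fin (T + 1) → H, ∑ x : Fin (T + 1) → V, if E z x then M.joint T z x else 0

end HMM

/-- A deterministic finite automaton with (finite) state set `Q` over the
vocabulary `V`: a transition function `step`, an initial state `start`, and a
set `accept` of accept states. -/
structure FinDFA (Q V : Type*) [Fintype Q] where
  step : Q → V → Q
  start : Q
  accept : Set Q

namespace FinDFA

variable {Q V : Type*} [Fintype Q]

/-- The extended transition function `δ̂` on strings: `δ̂(s, ε) = s` and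
`δ̂(s, w·x) = δ(δ̂(s, w), x)`. -/
def run (d : FinDFA Q V) (s : Q) (l : List V) : Q :=
  l.foldl d.step s

end FinDFA

/-- The lookahead table
`g_t(z, s) = Σ_{x_{t+1:T}} q(X_{t+1:T} = x_{t+1:T} | Z_t = z) · 1[δ̂(s, x_{t+1:T}) ∈ F]`
for an HMM paired with a DFA over the same vocabulary (positions indexed
`0, …, T`; at `t = T` the suffix is empty and `δ̂(s, ε) = s`). -/
def gtable {H V Q : Type*} [Fintype H] [Fintype V] [Fintype Q]
    (M : HMM H V) (d : FinDFA Q V) (T : ℕ) (t : Fin (T + 1)) (z : H) (s : Q) : ℝ :=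
  ∑ xs : Fin (T - t.val) → V,
    (M.prob T (fun zs x =>
        (∀ j : Fin (T - t.val),
          x ⟨t.val + 1 + j.val, by have := j.isLt; have := t.isLt; omega⟩ = xs j)
        ∧ zs t = z)
      / M.prob T (fun zs _ => zs t = z))
    * (if d.run s (List.ofFn xs) ∈ d.accept then 1 else 0)

theorem Fin.sum_univ_fun_succ {α M : Type*} [Fintype α] [AddCommMonoid M] (n : ℕ)
    (F : (Fin (n + 1) → α) → M) :
    ∑ f, F f = ∑ a, ∑ f : Fin n → α, F (Fin.cons a f) := by
  rw [← (Fin.consEquiv fun _ => α).sum_comp, Fintype.sum_prod_type]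
  rfl

namespace FinDFA

variable {Q V : Type*} [Fintype Q]

theorem run_cons (d : FinDFA Q V) (s : Q) (x : V) (l : List V) :
    d.run s (x :: l) = d.run (d.step s x) l :=
  rfl

end FinDFA

open scoped Matrix

namespace HMM

variable {H V : Type*} [Fintype H] [Fintype V] (M : HMM H V)

/-- `joint` with the initial distribution replaced by an arbitrary weight vector `μ`. Being
linear in `μ`, it lets the time origin be shifted: dropping the first step replaces `μ` by
`μ ᵥ* A`. -/
def jointFrom (μ : H → ℝ) (T : ℕ) (z : Fin (T + 1) → H) (x : Fin (T + 1) → V) : ℝ :=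
  μ (z 0) * M.B (z 0) (x 0) *
    ∏ i : Fin T, (M.A (z i.castSucc) (z i.succ) * M.B (z i.succ) (x i.succ))

def probFrom (μ : H → ℝ) (T : ℕ)
    (E : (Fin (T + 1) → H) → (Fin (T + 1) → V) → Prop) : ℝ :=
  ∑ z : Fin (T + 1) → H, ∑ x : Fin (T + 1) → V, if E z x then M.jointFrom μ T z x else 0

theorem prob_eq_probFrom (T : ℕ) (E : (Fin (T + 1) → H) → (Fin (T + 1) → V) → Prop) :
    M.prob T E = M.probFrom M.pi T E :=
  rfl

theorem probFrom_congr {μ : H → ℝ} {T : ℕ}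
    {E E' : (Fin (T + 1) → H) → (Fin (T + 1) → V) → Prop} (h : ∀ z x, E z x ↔ E' z x) :
    M.probFrom μ T E = M.probFrom μ T E' := by
  simp only [probFrom, h]

def pathWeight (a : H) {n : ℕ} (q : Fin n → H) (y : Fin n → V) : ℝ :=
  ∏ j : Fin n, M.A ((Fin.cons a q : Fin (n + 1) → H) j.castSucc) (q j) * M.B (q j) (y j)

/-- The backward probabilities `β_n(z, x_{1:n}) = q(X_{t+1:t+n} = x_{1:n} | Z_t = z)`. -/
def backward : (n : ℕ) → H → (Fin n → V) → ℝ
  | 0, _, _ => 1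
  | n + 1, z, xs => ∑ z', M.A z z' * M.B z' (xs 0) * backward n z' (Fin.tail xs)

theorem pathWeight_cons (a b : H) {n : ℕ} (q : Fin n → H) (v : V) (y : Fin n → V) :
    M.pathWeight a (Fin.cons b q) (Fin.cons v y) = M.A a b * M.B b v * M.pathWeight b q y := by
  simp [pathWeight, Fin.prod_univ_succ, mul_assoc]

theorem sum_pathWeight (a : H) {n : ℕ} (y : Fin n → V) :
    ∑ q, M.pathWeight a q y = M.backward n a y := by
  induction n generalizing a with
  | zero => simp [pathWeight, backward]
  | succ n ih =>
    rw [Fin.sum_univ_fun_succ, backward]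
    refine Finset.sum_congr rfl fun b _ => ?_
    rw [← Fin.cons_self_tail y]
    simp only [pathWeight_cons, ← Finset.mul_sum, ih, Fin.cons_zero, Fin.tail_cons]

theorem sum_backward (a : H) (n : ℕ) : ∑ y, M.backward n a y = 1 := by
  induction n generalizing a with
  | zero => simp [backward]
  | succ n ih =>
    calc ∑ y, M.backward (n + 1) a y
        = ∑ v, ∑ b, M.A a b * M.B b v * ∑ y, M.backward n b y := by
          simp only [backward, Fin.sum_univ_fun_succ, Fin.cons_zero, Fin.tail_cons,
            Finset.mul_sum]
          exact Finset.sum_congr rfl fun v _ => Finset.sum_comm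
      _ = 1 := by
          simp only [ih, mul_one]
          rw [Finset.sum_comm]
          simp [← Finset.mul_sum, M.B_row_sum_one, M.A_row_sum_one]

theorem jointFrom_cons_cons (μ : H → ℝ) (a : H) {n : ℕ} (q : Fin n → H) (v : V)
    (y : Fin n → V) :
    M.jointFrom μ n (Fin.cons a q) (Fin.cons v y) = μ a * M.B a v * M.pathWeight a q y := by
  simp [jointFrom, pathWeight]

theorem jointFrom_succ_cons_cons (μ : H → ℝ) (a : H) {T : ℕ} (z : Fin (T + 1) → H) (v : V)
    (x : Fin (T + 1) → V) :
    M.jointFrom μ (T + 1) (Fin.cons a z) (Fin.cons v x)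
      = μ a * M.B a v * M.jointFrom (M.A a) T z x := by
  simp [jointFrom, Fin.prod_univ_succ, mul_assoc]

theorem sum_mul_jointFrom (μ : H → ℝ) (T : ℕ) (z : Fin (T + 1) → H)
    (x : Fin (T + 1) → V) :
    ∑ a, μ a * M.jointFrom (M.A a) T z x = M.jointFrom (μ ᵥ* Matrix.of M.A) T z x := by
  simp [jointFrom, Matrix.vecMul, dotProduct, Finset.sum_mul, mul_assoc]

theorem probFrom_succ (μ : H → ℝ) (T : ℕ)
    (E : (Fin (T + 2) → H) → (Fin (T + 2) → V) → Prop)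
    (E' : (Fin (T + 1) → H) → (Fin (T + 1) → V) → Prop)
    (hE : ∀ z x, E z x ↔ E' (Fin.tail z) (Fin.tail x)) :
    M.probFrom μ (T + 1) E = M.probFrom (μ ᵥ* Matrix.of M.A) T E' := by
  calc M.probFrom μ (T + 1) E
      = ∑ a, ∑ z, ∑ v, ∑ x,
          if E' z x then μ a * M.B a v * M.jointFrom (M.A a) T z x else 0 := by
        simp only [probFrom, Fin.sum_univ_fun_succ, hE, Fin.tail_cons, jointFrom_succ_cons_cons]
    _ = ∑ a, ∑ z, ∑ x, if E' z x then μ a * M.jointFrom (M.A a) T z x else 0 := by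
        refine Finset.sum_congr rfl fun a _ => Finset.sum_congr rfl fun z _ => ?_
        rw [Finset.sum_comm]
        refine Finset.sum_congr rfl fun x _ => ?_
        split_ifs <;> simp [← Finset.sum_mul, ← Finset.mul_sum, M.B_row_sum_one]
    _ = ∑ z, ∑ x, if E' z x then ∑ a, μ a * M.jointFrom (M.A a) T z x else 0 := by
        rw [Finset.sum_comm]
        refine Finset.sum_congr rfl fun z _ => ?_
        rw [Finset.sum_comm]
        simp only [Finset.sum_ite_irrel, Finset.sum_const_zero]
    _ = M.probFrom (μ ᵥ* Matrix.of M.A) T E' := by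
        simp only [probFrom, sum_mul_jointFrom]

theorem probFrom_eq_sum_pathWeight (μ : H → ℝ) (n : ℕ)
    (E : (Fin (n + 1) → H) → (Fin (n + 1) → V) → Prop) :
    M.probFrom μ n E = ∑ a, ∑ v, ∑ q, ∑ y,
      if E (Fin.cons a q) (Fin.cons v y) then μ a * M.B a v * M.pathWeight a q y else 0 := by
  simp only [probFrom, Fin.sum_univ_fun_succ, jointFrom_cons_cons]
  exact Finset.sum_congr rfl fun a _ => Finset.sum_comm

theorem probFrom_state_zero (μ : H → ℝ) (n : ℕ) (a : H) :
    M.probFrom μ n (fun z _ => z 0 = a) = μ a := by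
  simp only [probFrom_eq_sum_pathWeight, Fin.cons_zero, Finset.sum_ite_irrel,
    Finset.sum_const_zero, Finset.sum_ite_eq', Finset.mem_univ, if_true, ← Finset.mul_sum,
    ← Finset.sum_mul]
  rw [Finset.sum_comm]
  simp [sum_pathWeight, sum_backward, M.B_row_sum_one]

theorem probFrom_tail_and_state_zero (μ : H → ℝ) (n : ℕ) (a : H) (xs : Fin n → V) :
    M.probFrom μ n (fun z x => Fin.tail x = xs ∧ z 0 = a) = μ a * M.backward n a xs := by
  simp [probFrom_eq_sum_pathWeight, Finset.sum_ite_irrel, ite_and, ← Finset.mul_sum,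
    ← Finset.sum_mul, sum_pathWeight, M.B_row_sum_one]

/-- The Markov property at time `t`: given `Z_t = a`, the emissions after `t` do not depend on
the past. -/
theorem probFrom_suffix_and_state (μ : H → ℝ) (t n T : ℕ) (h : t + n = T) (a : H)
    (xs : Fin n → V) :
    M.probFrom μ T
        (fun z x => (∀ j : Fin n, x ⟨t + 1 + j, by omega⟩ = xs j) ∧ z ⟨t, by omega⟩ = a)
      = M.probFrom μ T (fun z _ => z ⟨t, by omega⟩ = a) * M.backward n a xs := by
  induction t generalizing T μ with
  | zero =>
    obtain rfl : n = T := by omega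
    have succ_eq (j : Fin n) : (⟨0 + 1 + j, by omega⟩ : Fin (n + 1)) = j.succ :=
      Fin.ext (by simp only [Fin.val_succ]; omega)
    simp only [Fin.zero_eta]
    rw [probFrom_congr M (E' := fun z x => Fin.tail x = xs ∧ z 0 = a)
        (fun z x => by simp only [succ_eq, funext_iff, Fin.tail]),
      probFrom_tail_and_state_zero, probFrom_state_zero]
  | succ t ih =>
    obtain ⟨T, rfl⟩ : ∃ T', T = T' + 1 := ⟨T - 1, by omega⟩
    have succ_eq (j : Fin n) : (⟨t + 1 + 1 + j, by omega⟩ : Fin (T + 2))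
        = Fin.succ ⟨t + 1 + j, by omega⟩ :=
      Fin.ext (by simp only [Fin.val_succ]; omega)
    rw [probFrom_succ M μ T _
        (fun z x => (∀ j : Fin n, x ⟨t + 1 + j, by omega⟩ = xs j) ∧ z ⟨t, by omega⟩ = a)
        (fun z x => by simp only [succ_eq, Fin.tail, Fin.succ_mk]),
      probFrom_succ M μ T (fun z _ => z ⟨t + 1, by omega⟩ = a)
        (fun z _ => z ⟨t, by omega⟩ = a) (fun _ _ => Iff.rfl),
      ih _ _ (by omega)]

end HMM

section Lookahead

variable {H V Q : Type*} [Fintype H] [Fintype V] [Fintype Q] (M : HMM H V) (d : FinDFA Q V)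

def acceptProb (n : ℕ) (z : H) (s : Q) : ℝ :=
  ∑ xs : Fin n → V, M.backward n z xs * if d.run s (List.ofFn xs) ∈ d.accept then 1 else 0

theorem acceptProb_zero (z : H) (s : Q) :
    acceptProb M d 0 z s = if s ∈ d.accept then 1 else 0 := by
  simp [acceptProb, HMM.backward, FinDFA.run]

theorem acceptProb_succ (n : ℕ) (z : H) (s : Q) :
    acceptProb M d (n + 1) z s
      = ∑ x, ∑ z', M.A z z' * M.B z' x * acceptProb M d n z' (d.step s x) := by
  simp only [acceptProb, Fin.sum_univ_fun_succ, HMM.backward, Fin.cons_zero, Fin.tail_cons,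
    List.ofFn_succ, Fin.cons_succ, FinDFA.run_cons, Finset.mul_sum, Finset.sum_mul, mul_assoc]
  exact Finset.sum_congr rfl fun x _ => Finset.sum_comm

theorem gtable_eq_acceptProb {T : ℕ} (t : Fin (T + 1)) (n : ℕ) (h : t + n = T) (z : H) (s : Q)
    (hz : 0 < M.prob T (fun zs _ => zs t = z)) :
    gtable M d T t z s = acceptProb M d n z s := by
  obtain ⟨t, ht⟩ := t
  dsimp only [gtable, acceptProb] at h ⊢
  obtain rfl : n = T - t := by omega
  simp only [HMM.prob_eq_probFrom] at hz ⊢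
  refine Finset.sum_congr rfl fun xs _ => ?_
  rw [M.probFrom_suffix_and_state _ t (T - t) T h, mul_div_cancel_left₀ _ hz.ne']

end Lookahead

/-- **Backward recurrence for the HMM×DFA lookahead table.** With an HMM and a
DFA over the same vocabulary (positions indexed `0, …, T`), assume
`q(Z_t = z) > 0` for all positions `t` and hidden states `z`. Then the table
`g` satisfies `g_T(z, s) = 1[s ∈ F]` and, for every position `t < T`, every
hidden state `z`, and every DFA state `s`,
`g_t(z, s) = Σ_{x ∈ 𝒱} Σ_{z' ∈ ℋ} A(z, z') · B(z', x) · g_{t+1}(z', δ(s, x))`. -/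
theorem hmm_dfa_gtable_backward_recurrence
    {H V Q : Type*} [Fintype H] [Fintype V] [Fintype Q]
    (M : HMM H V) (d : FinDFA Q V) (T : ℕ)
    (hz : ∀ (t : Fin (T + 1)) (z : H), 0 < M.prob T (fun zs _ => zs t = z)) :
    (∀ (z : H) (s : Q),
        gtable M d T (Fin.last T) z s = if s ∈ d.accept then 1 else 0) ∧
      (∀ (t : ℕ) (ht : t < T) (z : H) (s : Q),
        gtable M d T ⟨t, by omega⟩ z s
          = ∑ x : V, ∑ z' : H,
              M.A z z' * M.B z' x * gtable M d T ⟨t + 1, by omega⟩ z' (d.step s x)) := by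
  refine ⟨fun z s => ?_, fun t ht z s => ?_⟩
  · rw [gtable_eq_acceptProb M d _ 0 (by simp) z s (hz _ z), acceptProb_zero]
  · obtain ⟨n, rfl⟩ : ∃ n, T = t + 1 + n := ⟨T - (t + 1), by omega⟩
    rw [gtable_eq_acceptProb M d _ (n + 1) (by simp; omega) z s (hz _ z), acceptProb_succ]
    refine Finset.sum_congr rfl fun x _ => Finset.sum_congr rfl fun z' _ => ?_
    rw [gtable_eq_acceptProb M d _ n rfl z' _ (hz _ z')]
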